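/- arXiv:1912.12052 — 4 statements merged into one kernel-verified Lean document; each statement's English description precedes it below -/
import Mathlib

section
/- (Lower semicontinuity of the penalty function along a.e. convergence of densities) Let ρ be a convex expectation on L^∞(μ) with penalty function ρ*. If {Qₙ} and Q₀ are probability measures absolutely continuous w.r.t. μ whose densities satisfy dQₙ/dμ → dQ₀/dμ μ-a.e., then ρ*(Q₀) ≤ liminfₙ ρ*(Qₙ). -/
open MeasureTheory Filter

/-- A convex expectation on `L^∞(μ)`: monotone, translation-invariant, convex. -/
def IsConvexExpectation {Ω : Type*} [MeasurableSpace Ω] (μ : Measure Ω) [IsFiniteMeasure μ]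
    (ρ : Lp ℝ ⊤ μ → ℝ) : Prop :=
  (∀ X Y : Lp ℝ ⊤ μ, Y ≤ X → ρ Y ≤ ρ X) ∧
  (∀ (X : Lp ℝ ⊤ μ) (c : ℝ), ρ (X + Lp.const ⊤ μ c) = ρ X + c) ∧
  (∀ (X Y : Lp ℝ ⊤ μ) (l : ℝ), 0 ≤ l → l ≤ 1 →
    ρ (l • X + (1 - l) • Y) ≤ l * ρ X + (1 - l) * ρ Y)


/-- The penalty function of `ρ`, written as a supremum over nonnegative `X ∈ L^∞(μ)`. -/
noncomputable def penalty {Ω : Type*} [MeasurableSpace Ω] (μ : Measure Ω) [IsFiniteMeasure μ]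
    (ρ : Lp ℝ ⊤ μ → ℝ) (P : Measure Ω) : EReal :=
  ⨆ X : Lp ℝ ⊤ μ, ⨆ _ : (0 : Lp ℝ ⊤ μ) ≤ X, ((∫ ω, X ω ∂P - ρ X : ℝ) : EReal)

/-- Lower semicontinuity of the penalty function along `μ`-a.e. convergence of densities:
if `dQₙ/dμ → dQ₀/dμ` `μ`-a.e., then `ρ*(Q₀) ≤ liminfₙ ρ*(Qₙ)`. -/
theorem penalty_lowerSemicontinuous {Ω : Type*} [MeasurableSpace Ω] (μ : Measure Ω)
    [IsProbabilityMeasure μ] (ρ : Lp ℝ ⊤ μ → ℝ) (hρ : IsConvexExpectation μ ρ)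
    (Q : ℕ → Measure Ω) (Q₀ : Measure Ω)
    [∀ n, IsProbabilityMeasure (Q n)] [IsProbabilityMeasure Q₀]
    (hQ : ∀ n, Q n ≪ μ) (hQ₀ : Q₀ ≪ μ)
    (hconv : ∀ᵐ ω ∂μ, Filter.Tendsto (fun n => (Q n).rnDeriv μ ω) Filter.atTop
      (nhds (Q₀.rnDeriv μ ω))) :
    penalty μ ρ Q₀ ≤ Filter.atTop.liminf (fun n => penalty μ ρ (Q n)) := by
  refine iSup_le fun X => iSup_le fun hX => ?_
  -- basic facts about `X`
  have hf_meas : AEStronglyMeasurable (X : Ω → ℝ) μ := Lp.aestronglyMeasurable X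
  have hf_nonneg : 0 ≤ᵐ[μ] (X : Ω → ℝ) := (Lp.coeFn_nonneg X).2 hX
  have hf_bdd : ∀ᵐ ω ∂μ, ‖(X : Ω → ℝ) ω‖ ≤ (eLpNormEssSup (X : Ω → ℝ) μ).toReal := by
    filter_upwards [ae_le_eLpNormEssSup (f := (X : Ω → ℝ)) (μ := μ)] with ω hω
    have hlt : eLpNormEssSup (X : Ω → ℝ) μ ≠ ⊤ := by
      have := Lp.eLpNorm_lt_top X
      rw [eLpNorm_exponent_top] at this
      exact this.ne
    have := ENNReal.toReal_mono hlt (by exact_mod_cast hω)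
    simpa using this
  set g : Ω → ENNReal := fun ω => ENNReal.ofReal ((X : Ω → ℝ) ω) with hg_def
  have hg : AEMeasurable g μ :=
    ENNReal.measurable_ofReal.comp_aemeasurable hf_meas.aemeasurable
  -- the key identity for any probability measure `ν ≪ μ`
  have key : ∀ (ν : Measure Ω), IsProbabilityMeasure ν → ν ≪ μ →
      ENNReal.ofReal (∫ ω, X ω ∂ν) = ∫⁻ ω, ν.rnDeriv μ ω * g ω ∂μ := by
    intro ν hνP hν
    have hfν : AEStronglyMeasurable (X : Ω → ℝ) ν := hf_meas.mono_ac hν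
    have hbν : ∀ᵐ ω ∂ν, ‖(X : Ω → ℝ) ω‖ ≤ (eLpNormEssSup (X : Ω → ℝ) μ).toReal :=
      hν.ae_le hf_bdd
    have hint : Integrable (X : Ω → ℝ) ν :=
      (memLp_top_of_bound hfν _ hbν).integrable le_top
    have hnn : 0 ≤ᵐ[ν] (X : Ω → ℝ) := hν.ae_le hf_nonneg
    rw [ofReal_integral_eq_lintegral_ofReal hint hnn,
      ← lintegral_rnDeriv_mul hν hg]
  -- nonnegativity of the integrals
  have hr_nonneg : ∀ n, 0 ≤ ∫ ω, X ω ∂(Q n) := fun n =>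
    integral_nonneg_of_ae ((hQ n).ae_le hf_nonneg)
  -- Fatou's lemma at the `ℝ≥0∞` level
  have fatou : ENNReal.ofReal (∫ ω, X ω ∂Q₀) ≤
      atTop.liminf (fun n => ENNReal.ofReal (∫ ω, X ω ∂(Q n))) := by
    have hfun : (fun n => ENNReal.ofReal (∫ ω, X ω ∂(Q n))) =
        fun n => ∫⁻ ω, (Q n).rnDeriv μ ω * g ω ∂μ :=
      funext fun n => key (Q n) inferInstance (hQ n)
    rw [key Q₀ inferInstance hQ₀, hfun]
    have hcongr : ∫⁻ ω, Q₀.rnDeriv μ ω * g ω ∂μ =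
        ∫⁻ ω, atTop.liminf (fun n => (Q n).rnDeriv μ ω * g ω) ∂μ := by
      refine lintegral_congr_ae ?_
      filter_upwards [hconv] with ω hω
      exact (Filter.Tendsto.liminf_eq
        (ENNReal.Tendsto.mul_const hω (Or.inr ENNReal.ofReal_ne_top))).symm
    rw [hcongr]
    exact lintegral_liminf_le' fun n =>
      ((Measure.measurable_rnDeriv (Q n) μ).aemeasurable.mul hg)
  -- eventual lower bound for the integrals
  have event : ∀ ε : ℝ, 0 < ε →
      ∀ᶠ n in atTop, (∫ ω, X ω ∂Q₀) - ε ≤ ∫ ω, X ω ∂(Q n) := by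
    intro ε hε
    rcases le_or_gt (∫ ω, X ω ∂Q₀) ε with h | h
    · exact Eventually.of_forall fun n => by linarith [hr_nonneg n]
    · have hlt : ENNReal.ofReal ((∫ ω, X ω ∂Q₀) - ε) <
          atTop.liminf (fun n => ENNReal.ofReal (∫ ω, X ω ∂(Q n))) :=
        lt_of_lt_of_le ((ENNReal.ofReal_lt_ofReal_iff (by linarith)).2 (by linarith)) fatou
      filter_upwards [eventually_lt_of_lt_liminf hlt] with n hn
      exact le_of_lt ((ENNReal.ofReal_lt_ofReal_iff_of_nonneg (by linarith)).1 hn)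
  -- conclude in `EReal`
  have step2 : ∀ ε : ℝ, 0 < ε →
      (((∫ ω, X ω ∂Q₀) - ρ X - ε : ℝ) : EReal) ≤
        atTop.liminf (fun n => penalty μ ρ (Q n)) := by
    intro ε hε
    refine le_liminf_of_le (by isBoundedDefault) ?_
    filter_upwards [event ε hε] with n hn
    calc (((∫ ω, X ω ∂Q₀) - ρ X - ε : ℝ) : EReal)
        ≤ (((∫ ω, X ω ∂(Q n)) - ρ X : ℝ) : EReal) := by
          exact_mod_cast (by linarith : (∫ ω, X ω ∂Q₀) - ρ X - ε ≤ (∫ ω, X ω ∂(Q n)) - ρ X)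
      _ ≤ penalty μ ρ (Q n) := le_iSup_of_le X (le_iSup_of_le hX le_rfl)
  by_contra hcon
  push_neg at hcon
  obtain ⟨z, hz1, hz2⟩ := EReal.exists_between_coe_real hcon
  have hzlt : z < (∫ ω, X ω ∂Q₀) - ρ X := by exact_mod_cast hz2
  have := step2 ((∫ ω, X ω ∂Q₀) - ρ X - z) (by linarith)
  have hzz : (((∫ ω, X ω ∂Q₀) - ρ X - ((∫ ω, X ω ∂Q₀) - ρ X - z) : ℝ) : EReal) = (z : EReal) := by
    norm_num
  rw [hzz] at this
  exact absurd (lt_of_le_of_lt this hz1) (lt_irrefl _)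
end

section
/- (Fatou-type property) If ρ is a convex expectation on L^∞(μ) admitting the representation ρ(X) = sup_{P ∈ M} (E_P[X] − ρ*(P)) over probability measures P ≪ μ, and {Xₙ} is a uniformly bounded sequence in L^∞(μ) converging in probability (equivalently μ-a.e. along a subsequence) to X, then ρ(X) ≤ liminfₙ ρ(Xₙ). -/
open MeasureTheory Filter
open scoped ENNReal NNReal Topology

/-- Fatou-type property: if `ρ` admits a robust representation
`ρ(X) = sup_{P ∈ M}(E_P[X] - ρ*(P))` over probability measures `P ≪ μ`, then `ρ` is lower
semicontinuous along uniformly bounded sequences converging in probability. -/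
theorem convexExpectation_fatou {Ω : Type*} [MeasurableSpace Ω] (μ : Measure Ω)
    [IsProbabilityMeasure μ] (ρ : Lp ℝ ⊤ μ → ℝ) (hρ : IsConvexExpectation μ ρ)
    (M : Set (Measure Ω)) (hM : ∀ P ∈ M, IsProbabilityMeasure P ∧ P ≪ μ)
    (pen : Measure Ω → EReal) (hpen : ∀ P, pen P ≠ ⊥)
    (hrep : ∀ X : Lp ℝ ⊤ μ, (ρ X : EReal) = ⨆ P ∈ M, (((∫ ω, X ω ∂P : ℝ) : EReal) - pen P))
    (Xs : ℕ → Lp ℝ ⊤ μ) (X : Lp ℝ ⊤ μ)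
    (hbdd : ∃ C : ℝ, ∀ n, ‖Xs n‖ ≤ C)
    (hconv : MeasureTheory.TendstoInMeasure μ (fun n => ⇑(Xs n)) Filter.atTop ⇑X) :
    ρ X ≤ Filter.atTop.liminf (fun n => ρ (Xs n)) := by
  obtain ⟨hmono, htrans, -⟩ := hρ
  obtain ⟨C, hC⟩ := hbdd
  -- pointwise a.e. bound
  have hb : ∀ n, ∀ᵐ ω ∂μ, ‖Xs n ω‖ ≤ C := by
    intro n
    filter_upwards [MeasureTheory.ae_le_eLpNormEssSup (f := ⇑(Xs n)) (μ := μ)] with ω hω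
    have h1 : ((‖Xs n ω‖₊ : ℝ≥0∞)).toReal ≤ (eLpNorm (⇑(Xs n)) ⊤ μ).toReal :=
      ENNReal.toReal_mono (Lp.eLpNorm_ne_top (Xs n))
        (by rw [eLpNorm_exponent_top]; exact hω)
    simp only [ENNReal.coe_toReal, coe_nnnorm] at h1
    exact h1.trans ((Lp.norm_def (Xs n)) ▸ hC n)
  -- lower bound for ρ (Xs n)
  have hlb : ∀ n, ρ 0 + (-C) ≤ ρ (Xs n) := by
    intro n
    have hle : Lp.const ⊤ μ (-C) ≤ Xs n := by
      rw [← Lp.coeFn_le]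
      filter_upwards [hb n, Lp.coeFn_const (p := (⊤ : ℝ≥0∞)) (μ := μ) (-C)] with ω hω hcω
      rw [hcω]
      simp only [Function.const_apply]
      exact (abs_le.1 ((Real.norm_eq_abs _) ▸ hω)).1
    calc ρ 0 + (-C) = ρ (0 + Lp.const ⊤ μ (-C)) := (htrans 0 (-C)).symm
      _ = ρ (Lp.const ⊤ μ (-C)) := by rw [zero_add]
      _ ≤ ρ (Xs n) := hmono _ _ hle
  have hub : ∀ n, ρ (Xs n) ≤ ρ 0 + C := by
    intro n
    have hle : Xs n ≤ Lp.const ⊤ μ C := by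
      rw [← Lp.coeFn_le]
      filter_upwards [hb n, Lp.coeFn_const (p := (⊤ : ℝ≥0∞)) (μ := μ) C] with ω hω hcω
      rw [hcω]
      simp only [Function.const_apply]
      exact (abs_le.1 ((Real.norm_eq_abs _) ▸ hω)).2
    calc ρ (Xs n) ≤ ρ (Lp.const ⊤ μ C) := hmono _ _ hle
      _ = ρ (0 + Lp.const ⊤ μ C) := by rw [zero_add]
      _ = ρ 0 + C := htrans 0 C
  have hbound : IsCoboundedUnder (· ≥ ·) atTop fun n => ρ (Xs n) :=
    (isBoundedUnder_of ⟨ρ 0 + C, fun n => hub n⟩ :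
      IsBoundedUnder (· ≤ ·) atTop fun n => ρ (Xs n)).isCoboundedUnder_ge
  -- convergence of integrals for each P ∈ M
  have hint : ∀ P ∈ M, Tendsto (fun n => ∫ ω, Xs n ω ∂P) atTop (𝓝 (∫ ω, X ω ∂P)) := by
    intro P hP
    obtain ⟨hPp, hPac⟩ := hM P hP
    refine tendsto_of_subseq_tendsto fun ns hns => ?_
    have htm : TendstoInMeasure μ (fun i => ⇑(Xs (ns i))) atTop ⇑X :=
      fun ε hε => (hconv ε hε).comp hns
    obtain ⟨ms, -, hae⟩ := htm.exists_seq_tendsto_ae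
    refine ⟨ms, ?_⟩
    apply tendsto_integral_of_dominated_convergence (fun _ => C)
    · exact fun i => (Lp.aestronglyMeasurable (Xs (ns (ms i)))).mono_ac hPac
    · exact integrable_const C
    · exact fun i => hPac.ae_le (hb (ns (ms i)))
    · exact hPac.ae_le hae
  set L := Filter.atTop.liminf (fun n => ρ (Xs n)) with hL
  have key : (ρ X : EReal) ≤ (L : EReal) := by
    rw [hrep X]
    refine iSup_le fun P => iSup_le fun hP => ?_
    rcases eq_or_ne (pen P) ⊤ with htop | htop
    · rw [htop]
      simp
    · lift pen P to ℝ using ⟨htop, hpen P⟩ with c hc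
      -- each n: ∫ Xs n dP - c ≤ ρ (Xs n)
      have hn : ∀ n, (∫ ω, Xs n ω ∂P) - c ≤ ρ (Xs n) := by
        intro n
        have h1 : (((∫ ω, Xs n ω ∂P : ℝ) : EReal) - pen P) ≤ (ρ (Xs n) : EReal) := by
          rw [hrep (Xs n)]
          exact le_iSup₂ (f := fun Q (_ : Q ∈ M) => ((∫ ω, Xs n ω ∂Q : ℝ) : EReal) - pen Q) P hP
        rw [← hc, ← EReal.coe_sub] at h1
        exact_mod_cast h1
      have h2 : Tendsto (fun n => (∫ ω, Xs n ω ∂P) - c) atTop (𝓝 ((∫ ω, X ω ∂P) - c)) :=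
        (hint P hP).sub_const c
      have h3 : (∫ ω, X ω ∂P) - c ≤ L := by
        rw [← h2.liminf_eq]
        exact liminf_le_liminf (Eventually.of_forall hn)
          h2.isBoundedUnder_ge hbound
      rw [← EReal.coe_sub]
      exact_mod_cast h3
  exact_mod_cast key
end

section
/- (Existence of optimal test) Let ρ₁, ρ₂ be convex expectations on L^∞(μ) that satisfy the Fatou-type property (ρᵢ(X) ≤ liminf ρᵢ(Xₙ) for bounded sequences converging a.e.), let K₁, K₂ ∈ L^∞(μ) with 0 ≤ K₁ < K₂, and let α ∈ ℝ with the feasible set X_α = {X ∈ L^∞(μ) : K₁ ≤ X ≤ K₂, ρ₁(X) ≤ α} nonempty. Then there exists X* ∈ X_α with ρ₂(K₂ − X*) = inf_{X ∈ X_α} ρ₂(K₂ − X). -/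
open MeasureTheory Filter

section OptTestAux
variable {Ω : Type*} [MeasurableSpace Ω] (μ : Measure Ω) [IsFiniteMeasure μ]

noncomputable def OptTest.toL2 (X : Lp ℝ ⊤ μ) : Lp ℝ 2 μ :=
  ((Lp.memLp X).mono_exponent le_top).toLp X

lemma OptTest.toL2_coe (X : Lp ℝ ⊤ μ) : OptTest.toL2 μ X =ᵐ[μ] X := MemLp.coeFn_toLp _

lemma OptTest.toL2_add (X Y : Lp ℝ ⊤ μ) :
    OptTest.toL2 μ (X + Y) = OptTest.toL2 μ X + OptTest.toL2 μ Y := by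
  apply Lp.ext
  filter_upwards [OptTest.toL2_coe μ (X + Y), OptTest.toL2_coe μ X, OptTest.toL2_coe μ Y,
    Lp.coeFn_add X Y, Lp.coeFn_add (OptTest.toL2 μ X) (OptTest.toL2 μ Y)] with ω h1 h2 h3 h4 h5
  rw [h1, h4, h5, Pi.add_apply, Pi.add_apply, h2, h3]

lemma OptTest.toL2_smul (c : ℝ) (X : Lp ℝ ⊤ μ) :
    OptTest.toL2 μ (c • X) = c • OptTest.toL2 μ X := by
  apply Lp.ext
  filter_upwards [OptTest.toL2_coe μ (c • X), OptTest.toL2_coe μ X,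
    Lp.coeFn_smul c X, Lp.coeFn_smul c (OptTest.toL2 μ X)] with ω h1 h2 h3 h4
  rw [h1, h3, h4, Pi.smul_apply, Pi.smul_apply, h2]

lemma OptTest.norm_toL2_le {X Y : Lp ℝ ⊤ μ} (h : ∀ᵐ ω ∂μ, ‖X ω‖ ≤ ‖Y ω‖) :
    ‖OptTest.toL2 μ X‖ ≤ ‖OptTest.toL2 μ Y‖ := by
  rw [Lp.norm_def, Lp.norm_def]
  refine ENNReal.toReal_mono (Lp.eLpNorm_ne_top _) ?_
  rw [eLpNorm_congr_ae (OptTest.toL2_coe μ X), eLpNorm_congr_ae (OptTest.toL2_coe μ Y)]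
  exact eLpNorm_mono_ae h

omit [IsFiniteMeasure μ] in
lemma OptTest.norm_inf_le {X Y : Lp ℝ ⊤ μ} (h : ∀ᵐ ω ∂μ, ‖X ω‖ ≤ ‖Y ω‖) : ‖X‖ ≤ ‖Y‖ := by
  rw [Lp.norm_def, Lp.norm_def]
  exact ENNReal.toReal_mono (Lp.eLpNorm_ne_top _) (eLpNorm_mono_ae h)

end OptTestAux

set_option maxHeartbeats 1600000 in
/-- Existence of an optimal test: if `ρ₁, ρ₂` are convex expectations with the Fatou-type
property, then the infimum of `ρ₂(K₂ - X)` over the feasible set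
`X_α = {K₁ ≤ X ≤ K₂, ρ₁(X) ≤ α}` is attained. -/
theorem exists_optimal_test {Ω : Type*} [MeasurableSpace Ω] (μ : Measure Ω)
    [IsProbabilityMeasure μ] (ρ₁ ρ₂ : Lp ℝ ⊤ μ → ℝ)
    (hρ₁ : IsConvexExpectation μ ρ₁) (hρ₂ : IsConvexExpectation μ ρ₂)
    (hFatou₁ : ∀ (Xs : ℕ → Lp ℝ ⊤ μ) (X : Lp ℝ ⊤ μ), (∃ C : ℝ, ∀ n, ‖Xs n‖ ≤ C) →
      (∀ᵐ ω ∂μ, Filter.Tendsto (fun n => Xs n ω) Filter.atTop (nhds (X ω))) →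
      ρ₁ X ≤ Filter.atTop.liminf (fun n => ρ₁ (Xs n)))
    (hFatou₂ : ∀ (Xs : ℕ → Lp ℝ ⊤ μ) (X : Lp ℝ ⊤ μ), (∃ C : ℝ, ∀ n, ‖Xs n‖ ≤ C) →
      (∀ᵐ ω ∂μ, Filter.Tendsto (fun n => Xs n ω) Filter.atTop (nhds (X ω))) →
      ρ₂ X ≤ Filter.atTop.liminf (fun n => ρ₂ (Xs n)))
    (K₁ K₂ : Lp ℝ ⊤ μ) (hK₁ : 0 ≤ K₁) (hK : ∀ᵐ ω ∂μ, K₁ ω < K₂ ω) (α : ℝ)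
    (hne : {X : Lp ℝ ⊤ μ | K₁ ≤ X ∧ X ≤ K₂ ∧ ρ₁ X ≤ α}.Nonempty) :
    ∃ Xstar ∈ {X : Lp ℝ ⊤ μ | K₁ ≤ X ∧ X ≤ K₂ ∧ ρ₁ X ≤ α},
      ∀ X ∈ {X : Lp ℝ ⊤ μ | K₁ ≤ X ∧ X ≤ K₂ ∧ ρ₁ X ≤ α},
        ρ₂ (K₂ - Xstar) ≤ ρ₂ (K₂ - X) := by
  classical
  obtain ⟨hmono₁, htrans₁, hconv₁⟩ := hρ₁
  obtain ⟨hmono₂, htrans₂, hconv₂⟩ := hρ₂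
  set S : Set (Lp ℝ ⊤ μ) := {X : Lp ℝ ⊤ μ | K₁ ≤ X ∧ X ≤ K₂ ∧ ρ₁ X ≤ α} with hS
  set F : Lp ℝ ⊤ μ → ℝ := fun X => ρ₂ (K₂ - X) with hF
  -- the infimum
  have hbddF : BddBelow (F '' S) := by
    refine ⟨ρ₂ 0, ?_⟩
    rintro y ⟨X, hX, rfl⟩
    exact hmono₂ _ _ (sub_nonneg.mpr hX.2.1)
  set m : ℝ := sInf (F '' S) with hm
  have hm_le : ∀ X ∈ S, m ≤ F X := fun X hX => csInf_le hbddF ⟨X, hX, rfl⟩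
  have hεpos : ∀ n : ℕ, (0:ℝ) < 1 / (n + 1) := fun n => by positivity
  -- nearly optimal sets
  set C : ℕ → Set (Lp ℝ ⊤ μ) := fun n => {X | X ∈ S ∧ F X ≤ m + 1 / (n + 1)} with hC
  have hCne : ∀ n, (C n).Nonempty := by
    intro n
    obtain ⟨y, ⟨X, hXS, rfl⟩, hy⟩ :=
      exists_lt_of_csInf_lt (hne.image F) (lt_add_of_pos_right m (hεpos n))
    exact ⟨X, hXS, hy.le⟩
  have hCanti : ∀ {n k : ℕ}, n ≤ k → C k ⊆ C n := by
    intro n k hnk X hX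
    have h1k : (1:ℝ) / (k + 1) ≤ 1 / (n + 1) := by
      apply one_div_le_one_div_of_le (by positivity)
      exact_mod_cast add_le_add_left (Nat.cast_le.2 hnk) 1
    exact ⟨hX.1, hX.2.trans (by linarith)⟩
  -- a.e. facts about members of S
  have haeS : ∀ X ∈ S, ∀ᵐ ω ∂μ, 0 ≤ K₁ ω ∧ K₁ ω ≤ X ω ∧ X ω ≤ K₂ ω := by
    intro X hX
    filter_upwards [(Lp.coeFn_nonneg K₁).2 hK₁, (Lp.coeFn_le K₁ X).2 hX.1,
      (Lp.coeFn_le X K₂).2 hX.2.1] with ω h1 h2 h3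
    exact ⟨h1, h2, h3⟩
  have hnormae : ∀ X ∈ S, ∀ᵐ ω ∂μ, ‖X ω‖ ≤ ‖K₂ ω‖ := by
    intro X hX
    filter_upwards [haeS X hX] with ω ⟨h1, h2, h3⟩
    rw [Real.norm_eq_abs, Real.norm_eq_abs, abs_of_nonneg (h1.trans h2),
      abs_of_nonneg ((h1.trans h2).trans h3)]
    exact h3
  -- midpoints stay in C n
  have hmid : ∀ (n : ℕ) (X Y : Lp ℝ ⊤ μ), X ∈ C n → Y ∈ C n →
      ((1/2 : ℝ) • X + (1/2 : ℝ) • Y) ∈ C n := by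
    intro n X Y hX hY
    have hcXY : ((1/2 : ℝ) • X + (1/2 : ℝ) • Y) = ((1/2 : ℝ) • X + (1 - (1/2 : ℝ)) • Y) := by
      norm_num
    have hord : K₁ ≤ (1/2 : ℝ) • X + (1/2 : ℝ) • Y ∧ (1/2 : ℝ) • X + (1/2 : ℝ) • Y ≤ K₂ := by
      constructor
      · rw [← Lp.coeFn_le]
        filter_upwards [haeS X hX.1, haeS Y hY.1,
          Lp.coeFn_add ((1/2 : ℝ) • X) ((1/2 : ℝ) • Y), Lp.coeFn_smul (1/2 : ℝ) X,
          Lp.coeFn_smul (1/2 : ℝ) Y] with ω h1 h2 h3 h4 h5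
        rw [h3, Pi.add_apply, h4, h5, Pi.smul_apply, Pi.smul_apply, smul_eq_mul, smul_eq_mul]
        have := h1.2.1; have := h2.2.1; linarith
      · rw [← Lp.coeFn_le]
        filter_upwards [haeS X hX.1, haeS Y hY.1,
          Lp.coeFn_add ((1/2 : ℝ) • X) ((1/2 : ℝ) • Y), Lp.coeFn_smul (1/2 : ℝ) X,
          Lp.coeFn_smul (1/2 : ℝ) Y] with ω h1 h2 h3 h4 h5
        rw [h3, Pi.add_apply, h4, h5, Pi.smul_apply, Pi.smul_apply, smul_eq_mul, smul_eq_mul]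
        have := h1.2.2; have := h2.2.2; linarith
    have hρ₁mid : ρ₁ ((1/2 : ℝ) • X + (1/2 : ℝ) • Y) ≤ α := by
      rw [hcXY]
      have h := hconv₁ X Y (1/2) (by norm_num) (by norm_num)
      have := hX.1.2.2; have := hY.1.2.2; linarith
    have hρ₂mid : F ((1/2 : ℝ) • X + (1/2 : ℝ) • Y) ≤ m + 1 / (n + 1) := by
      have hsplit : K₂ - ((1/2 : ℝ) • X + (1/2 : ℝ) • Y)
          = (1/2 : ℝ) • (K₂ - X) + (1 - (1/2 : ℝ)) • (K₂ - Y) := by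
        module
      have h := hconv₂ (K₂ - X) (K₂ - Y) (1/2) (by norm_num) (by norm_num)
      have h1 := hX.2; have h2 := hY.2
      simp only [hF] at h1 h2 ⊢
      rw [hsplit]
      norm_num at h ⊢
      simp only [one_div] at h1 h2
      linarith
    exact ⟨⟨hord.1, hord.2, hρ₁mid⟩, hρ₂mid⟩
  -- L² norms and near-minimizers
  set NN : Lp ℝ ⊤ μ → ℝ := fun X => ‖OptTest.toL2 μ X‖ with hNN
  have hNNne : ∀ n, (NN '' C n).Nonempty := fun n => (hCne n).image NN
  have hNNbdd : ∀ n, BddBelow (NN '' C n) := fun n =>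
    ⟨0, by rintro y ⟨X, _, rfl⟩; exact norm_nonneg _⟩
  set d : ℕ → ℝ := fun n => sInf (NN '' C n) with hd
  have hd_le : ∀ n, ∀ X ∈ C n, d n ≤ NN X := fun n X hX => csInf_le (hNNbdd n) ⟨X, hX, rfl⟩
  have hd0 : ∀ n, 0 ≤ d n := fun n =>
    le_csInf (hNNne n) (by rintro y ⟨X, _, rfl⟩; exact norm_nonneg _)
  have hNND : ∀ X ∈ S, NN X ≤ NN K₂ := fun X hX => OptTest.norm_toL2_le μ (hnormae X hX)
  have hdD : ∀ n, d n ≤ NN K₂ := by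
    intro n
    obtain ⟨X, hX⟩ := hCne n
    exact (hd_le n X hX).trans (hNND X hX.1)
  have hdmono : Monotone d := fun n k hnk =>
    csInf_le_csInf (hNNbdd n) (hNNne k) (Set.image_mono (hCanti hnk))
  set L : ℝ := ⨆ n, d n with hL
  have hbddL : BddAbove (Set.range d) := ⟨NN K₂, by rintro y ⟨n, rfl⟩; exact hdD n⟩
  have hdL : ∀ n, d n ≤ L := fun n => le_ciSup hbddL n
  have hdtend : Tendsto d atTop (nhds L) := tendsto_atTop_ciSup hdmono hbddL
  have hchoice : ∀ n : ℕ, ∃ X, X ∈ C n ∧ NN X ≤ d n + 1 / (n + 1) := by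
    intro n
    obtain ⟨y, ⟨X, hX, rfl⟩, hy⟩ :=
      exists_lt_of_csInf_lt (hNNne n) (lt_add_of_pos_right (d n) (hεpos n))
    exact ⟨X, hX, hy.le⟩
  choose x hxC hxNN using hchoice
  -- the sequence is Cauchy in L²
  set h : ℕ → ℝ := fun n => 2 * ((d n + 1 / (n + 1)) ^ 2 - d n ^ 2) + 2 * (L ^ 2 - d n ^ 2)
    with hhdef
  have hεtend : Tendsto (fun n : ℕ => 1 / ((n : ℝ) + 1)) atTop (nhds 0) :=
    tendsto_one_div_add_atTop_nhds_zero_nat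
  have hh0 : Tendsto h atTop (nhds 0) := by
    have ht : Tendsto h atTop (nhds (2 * ((L + 0) ^ 2 - L ^ 2) + 2 * (L ^ 2 - L ^ 2))) := by
      apply Tendsto.add
      · exact (((hdtend.add hεtend).pow 2).sub (hdtend.pow 2)).const_mul 2
      · exact (tendsto_const_nhds.sub (hdtend.pow 2)).const_mul 2
    simpa using ht
  have hhnn : ∀ n, 0 ≤ h n := by
    intro n
    have h1 : (0:ℝ) < 1 / (n + 1) := hεpos n
    have h2 := hdL n
    have h3 := hd0 n
    simp only [hhdef]
    nlinarith
  have hkey : ∀ n k, n ≤ k →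
      ‖OptTest.toL2 μ (x n) - OptTest.toL2 μ (x k)‖ ^ 2 ≤ h n + h k := by
    intro n k hnk
    set a := OptTest.toL2 μ (x n) with ha
    set b := OptTest.toL2 μ (x k) with hb
    have hpar := parallelogram_law_with_norm ℝ a b
    have hpar' : ‖a + b‖ ^ 2 + ‖a - b‖ ^ 2 = 2 * (‖a‖ ^ 2 + ‖b‖ ^ 2) := by
      rw [pow_two, pow_two, pow_two, pow_two]; linarith
    have hmidm : ((1/2 : ℝ) • x n + (1/2 : ℝ) • x k) ∈ C n :=
      hmid n _ _ (hxC n) (hCanti hnk (hxC k))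
    have hmid2 : NN ((1/2 : ℝ) • x n + (1/2 : ℝ) • x k) = (1/2) * ‖a + b‖ := by
      simp only [hNN]
      rw [OptTest.toL2_add, OptTest.toL2_smul, OptTest.toL2_smul, ← smul_add, norm_smul]
      norm_num
      rfl
    have hab : 2 * d n ≤ ‖a + b‖ := by
      have := hd_le n _ hmidm
      rw [hmid2] at this
      linarith
    have han : ‖a‖ ≤ d n + 1 / (n + 1) := hxNN n
    have hbk : ‖b‖ ≤ d k + 1 / (k + 1) := hxNN k
    have hdnL := hdL n
    have hdkL := hdL k
    have hd0n := hd0 n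
    have hd0k := hd0 k
    have hεn := hεpos n
    have hεk := hεpos k
    have ha2 : ‖a‖ ^ 2 ≤ (d n + 1 / (n + 1)) ^ 2 := pow_le_pow_left₀ (norm_nonneg a) han 2
    have hb2 : ‖b‖ ^ 2 ≤ (d k + 1 / (k + 1)) ^ 2 := pow_le_pow_left₀ (norm_nonneg b) hbk 2
    have hab2 : 4 * d n ^ 2 ≤ ‖a + b‖ ^ 2 := by
      have h5 : (2 * d n) ^ 2 ≤ ‖a + b‖ ^ 2 := pow_le_pow_left₀ (by linarith) hab 2
      calc 4 * d n ^ 2 = (2 * d n) ^ 2 := by ring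
      _ ≤ _ := h5
    have hL2 : d k ^ 2 ≤ L ^ 2 := pow_le_pow_left₀ hd0k hdkL 2
    simp only [hhdef]
    linarith
  have hcauchy : CauchySeq (fun n => OptTest.toL2 μ (x n)) := by
    rw [Metric.cauchySeq_iff']
    intro ε hε
    obtain ⟨N, hN⟩ := (Metric.tendsto_atTop.mp hh0) (ε ^ 2 / 2) (by positivity)
    refine ⟨N, fun n hn => ?_⟩
    have h1 : h n < ε ^ 2 / 2 := by
      have := hN n hn; rwa [Real.dist_eq, sub_zero, abs_of_nonneg (hhnn n)] at this
    have h2 : h N < ε ^ 2 / 2 := by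
      have := hN N le_rfl; rwa [Real.dist_eq, sub_zero, abs_of_nonneg (hhnn N)] at this
    have h3 := hkey N n hn
    rw [dist_eq_norm]
    have h4 : ‖OptTest.toL2 μ (x n) - OptTest.toL2 μ (x N)‖ ^ 2 < ε ^ 2 := by
      rw [norm_sub_rev]
      calc ‖OptTest.toL2 μ (x N) - OptTest.toL2 μ (x n)‖ ^ 2 ≤ h N + h n := h3
        _ < ε ^ 2 / 2 + ε ^ 2 / 2 := add_lt_add h2 h1
        _ = ε ^ 2 := by ring
    exact lt_of_pow_lt_pow_left₀ 2 hε.le h4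
  obtain ⟨Y, hY⟩ := cauchySeq_tendsto_of_complete hcauchy
  haveI : Fact ((1 : ENNReal) ≤ 2) := ⟨one_le_two⟩
  have htm : TendstoInMeasure μ (fun n => (OptTest.toL2 μ (x n) : Ω → ℝ)) atTop Y :=
    tendstoInMeasure_of_tendsto_Lp hY
  obtain ⟨ns, hns_mono, hns_ae⟩ := htm.exists_seq_tendsto_ae
  have haeall : ∀ᵐ ω ∂μ, ∀ n : ℕ,
      (0 ≤ K₁ ω ∧ K₁ ω ≤ x n ω ∧ x n ω ≤ K₂ ω) ∧ OptTest.toL2 μ (x n) ω = x n ω := by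
    rw [ae_all_iff]
    intro n
    filter_upwards [haeS (x n) (hxC n).1, OptTest.toL2_coe μ (x n)] with ω h1 h2 using ⟨h1, h2⟩
  have htend_x : ∀ᵐ ω ∂μ, Tendsto (fun i => x (ns i) ω) atTop (nhds (Y ω)) := by
    filter_upwards [hns_ae, haeall] with ω h1 h2
    have heq : (fun i => (x (ns i) : Ω → ℝ) ω) = fun i => OptTest.toL2 μ (x (ns i)) ω :=
      funext fun i => ((h2 (ns i)).2).symm
    rw [heq]; exact h1
  have hYbd : ∀ᵐ ω ∂μ, K₁ ω ≤ Y ω ∧ Y ω ≤ K₂ ω := by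
    filter_upwards [htend_x, haeall] with ω h1 h2
    exact ⟨ge_of_tendsto' h1 fun i => (h2 (ns i)).1.2.1,
      le_of_tendsto' h1 fun i => (h2 (ns i)).1.2.2⟩
  have hYmem : MemLp (Y : Ω → ℝ) ⊤ μ := by
    apply MemLp.mono (Lp.memLp K₂) (Lp.aestronglyMeasurable Y)
    filter_upwards [hYbd, (Lp.coeFn_nonneg K₁).2 hK₁] with ω h1 h0
    rw [Real.norm_eq_abs, Real.norm_eq_abs, abs_of_nonneg (h0.trans h1.1),
      abs_of_nonneg ((h0.trans h1.1).trans h1.2)]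
    exact h1.2
  set Xs : Lp ℝ ⊤ μ := hYmem.toLp Y with hXsdef
  have hXsY : Xs =ᵐ[μ] Y := MemLp.coeFn_toLp _
  have htdXs : ∀ᵐ ω ∂μ, Tendsto (fun i => x (ns i) ω) atTop (nhds (Xs ω)) := by
    filter_upwards [htend_x, hXsY] with ω h1 h2
    rw [h2]; exact h1
  have hXsS : Xs ∈ S := by
    refine ⟨?_, ?_, ?_⟩
    · rw [← Lp.coeFn_le]
      filter_upwards [hXsY, hYbd] with ω h1 h2
      rw [h1]; exact h2.1
    · rw [← Lp.coeFn_le]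
      filter_upwards [hXsY, hYbd] with ω h1 h2
      rw [h1]; exact h2.2
    · have hbd : ∃ Cb : ℝ, ∀ i, ‖x (ns i)‖ ≤ Cb :=
        ⟨‖K₂‖, fun i => OptTest.norm_inf_le μ (hnormae _ (hxC (ns i)).1)⟩
      refine (hFatou₁ (fun i => x (ns i)) Xs hbd htdXs).trans ?_
      refine liminf_le_of_frequently_le
        (Frequently.of_forall fun i => (hxC (ns i)).1.2.2) ?_
      exact isBoundedUnder_of ⟨ρ₁ K₁, fun i => hmono₁ _ _ (hxC (ns i)).1.1⟩
  have hFXs : F Xs ≤ m := by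
    have hbd : ∃ Cb : ℝ, ∀ i, ‖K₂ - x (ns i)‖ ≤ Cb := by
      refine ⟨‖K₂‖ + ‖K₂‖, fun i => ?_⟩
      have h5 := OptTest.norm_inf_le μ (hnormae _ (hxC (ns i)).1)
      calc ‖K₂ - x (ns i)‖ ≤ ‖K₂‖ + ‖x (ns i)‖ := norm_sub_le _ _
        _ ≤ ‖K₂‖ + ‖K₂‖ := by linarith
    have haesub : ∀ᵐ ω ∂μ, ∀ i : ℕ, (K₂ - x (ns i)) ω = K₂ ω - x (ns i) ω := by
      rw [ae_all_iff]
      intro i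
      filter_upwards [Lp.coeFn_sub K₂ (x (ns i))] with ω hω using by rw [hω]; rfl
    have htd : ∀ᵐ ω ∂μ, Tendsto (fun i => (K₂ - x (ns i)) ω) atTop (nhds ((K₂ - Xs) ω)) := by
      filter_upwards [htdXs, haesub, Lp.coeFn_sub K₂ Xs] with ω h1 h3 h4
      rw [h4, Pi.sub_apply]
      have heq : (fun i => (K₂ - x (ns i)) ω) = fun i => K₂ ω - x (ns i) ω :=
        funext fun i => h3 i
      rw [heq]
      exact Tendsto.const_sub _ h1
    refine (hFatou₂ (fun i => K₂ - x (ns i)) (K₂ - Xs) hbd htd).trans ?_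
    have h0 : Tendsto (fun i => 1 / ((ns i : ℝ) + 1)) atTop (nhds 0) := by
      refine squeeze_zero (fun i => (hεpos (ns i)).le) (fun i => ?_) hεtend
      apply one_div_le_one_div_of_le (by positivity)
      exact_mod_cast add_le_add_left (Nat.cast_le.2 hns_mono.le_apply) 1
    have hvlim : Tendsto (fun i => m + 1 / ((ns i : ℝ) + 1)) atTop (nhds m) := by
      simpa using tendsto_const_nhds.add h0
    have hle : ∀ i, ρ₂ (K₂ - x (ns i)) ≤ m + 1 / ((ns i : ℝ) + 1) := fun i => (hxC (ns i)).2
    calc liminf (fun i => ρ₂ (K₂ - x (ns i))) atTop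
        ≤ liminf (fun i => m + 1 / ((ns i : ℝ) + 1)) atTop := by
          refine liminf_le_liminf (Eventually.of_forall hle) ?_ ?_
          · exact isBoundedUnder_of ⟨ρ₂ 0, fun i =>
              hmono₂ _ _ (sub_nonneg.mpr (hxC (ns i)).1.2.1)⟩
          · refine (isBoundedUnder_of ⟨m + 1, fun i => add_le_add_right ?_ m⟩).isCoboundedUnder_ge
            rw [div_le_one (by positivity)]
            linarith [(Nat.cast_nonneg (ns i) : (0:ℝ) ≤ ((ns i : ℝ)))]
      _ = m := hvlim.liminf_eq
  exact ⟨Xs, hXsS, fun X hX => hFXs.trans (hm_le X hX)⟩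
end

section
/- (Active constraint / duality of levels) Assume ρ₁, ρ₂ are convex expectations on L^∞(μ) continuous from below, X* is an optimal test for minimizing ρ₂(K₂−X) over X_α = {K₁ ≤ X ≤ K₂, ρ₁(X) ≤ α}, Q* is a representative measure with E_{Q*}[K₂−X*] = inf_{X ∈ X_α} E_{Q*}[K₂−X] =: γ_α, and γ_α > 0. Then ρ₁(X*) = α and X* minimizes ρ₁ over X^{γ_α} := {X ∈ L^∞(μ): K₁ ≤ X ≤ K₂, E_{Q*}[K₂−X] ≤ γ_α}, i.e., ρ₁(X*) = inf_{X ∈ X^{γ_α}} ρ₁(X) = α. -/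
open MeasureTheory Filter

/-- `ρ` is continuous from below. -/
def ContinuousFromBelow {Ω : Type*} [MeasurableSpace Ω] (μ : Measure Ω) [IsFiniteMeasure μ]
    (ρ : Lp ℝ ⊤ μ → ℝ) : Prop :=
  ∀ (Xs : ℕ → Lp ℝ ⊤ μ) (X : Lp ℝ ⊤ μ), Monotone Xs →
    (∀ᵐ ω ∂μ, Filter.Tendsto (fun n => Xs n ω) Filter.atTop (nhds (X ω))) →
    Filter.Tendsto (fun n => ρ (Xs n)) Filter.atTop (nhds (ρ X))

section Aux

variable {Ω : Type*} [MeasurableSpace Ω] {μ : Measure Ω}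

/-- An `L^∞` function is a.e. bounded by its norm. -/
lemma linfty_ae_bound [IsFiniteMeasure μ] (f : Lp ℝ ⊤ μ) : ∀ᵐ ω ∂μ, ‖f ω‖ ≤ ‖f‖ := by
  have h : ∀ᵐ ω ∂μ, (‖f ω‖₊ : ENNReal) ≤ eLpNormEssSup (⇑f) μ := ae_le_eLpNormEssSup
  have hne : eLpNormEssSup (⇑f) μ ≠ ⊤ := by
    rw [← eLpNorm_exponent_top]; exact Lp.eLpNorm_ne_top f
  filter_upwards [h] with ω hω
  rw [Lp.norm_def, eLpNorm_exponent_top]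
  calc ‖f ω‖ = ((‖f ω‖₊ : ENNReal)).toReal := by simp
    _ ≤ (eLpNormEssSup (⇑f) μ).toReal := ENNReal.toReal_mono hne hω

/-- An `L^∞(μ)` function is integrable w.r.t. any finite measure `Q ≪ μ`. -/
lemma linfty_integrable [IsFiniteMeasure μ] (Q : Measure Ω) [IsFiniteMeasure Q] (hQ : Q ≪ μ)
    (f : Lp ℝ ⊤ μ) : Integrable (⇑f) Q := by
  have hb : ∀ᵐ ω ∂Q, ‖f ω‖ ≤ ‖f‖ := hQ.ae_le (linfty_ae_bound f)
  have hm : AEStronglyMeasurable (⇑f) Q := (Lp.aestronglyMeasurable f).mono_ac hQ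
  exact (memLp_top_of_bound hm ‖f‖ hb).integrable le_top

/-- Key step: if `X` is feasible for the `Q*`-constraint, then `ρ₁ X ≥ α`. -/
lemma key_step (μ : Measure Ω) [IsProbabilityMeasure μ]
    (ρ₁ : Lp ℝ ⊤ μ → ℝ)
    (hmono : ∀ X Y : Lp ℝ ⊤ μ, Y ≤ X → ρ₁ Y ≤ ρ₁ X)
    (htrans : ∀ (X : Lp ℝ ⊤ μ) (c : ℝ), ρ₁ (X + Lp.const ⊤ μ c) = ρ₁ X + c)
    (K₁ K₂ : Lp ℝ ⊤ μ) (α : ℝ)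
    (Qstar : Measure Ω) [IsProbabilityMeasure Qstar] (hQstar : Qstar ≪ μ)
    (γ : ℝ)
    (hγinf : ∀ X : Lp ℝ ⊤ μ, K₁ ≤ X → X ≤ K₂ → ρ₁ X ≤ α →
      γ ≤ ∫ ω, (K₂ ω - X ω) ∂Qstar)
    (hγpos : 0 < γ)
    (X : Lp ℝ ⊤ μ) (h1 : K₁ ≤ X) (h2 : X ≤ K₂)
    (h3 : ∫ ω, (K₂ ω - X ω) ∂Qstar ≤ γ) : α ≤ ρ₁ X := by
  by_contra hlt
  push_neg at hlt
  set ε := α - ρ₁ X with hεdef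
  have hε : 0 < ε := by simp only [hεdef]; linarith
  set Y := (X + Lp.const ⊤ μ ε) ⊓ K₂ with hYdef
  have hconst : (0 : Lp ℝ ⊤ μ) ≤ Lp.const ⊤ μ ε := by
    rw [← Lp.coeFn_nonneg]
    filter_upwards [Lp.coeFn_const (p := ⊤) (μ := μ) (c := ε)] with ω hω
    rw [hω]; exact hε.le
  have hXle : X ≤ X + Lp.const ⊤ μ ε := le_add_of_nonneg_right hconst
  have hY1 : K₁ ≤ Y := le_inf (h1.trans hXle) (h1.trans h2)
  have hY2 : Y ≤ K₂ := inf_le_right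
  have hρY : ρ₁ Y ≤ α := by
    have h := hmono _ _ (inf_le_left : Y ≤ X + Lp.const ⊤ μ ε)
    rw [htrans] at h
    simp only [hεdef] at h ⊢; linarith
  have hint : γ ≤ ∫ ω, (K₂ ω - Y ω) ∂Qstar := hγinf Y hY1 hY2 hρY
  -- integrability
  have iK₂ : Integrable (⇑K₂) Qstar := linfty_integrable Qstar hQstar K₂
  have iX : Integrable (⇑X) Qstar := linfty_integrable Qstar hQstar X
  have iY : Integrable (⇑Y) Qstar := linfty_integrable Qstar hQstar Y
  -- `X ≤ Y` a.e. w.r.t. `Q*`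
  have hXY : X ≤ Y := le_inf hXle h2
  have hXYae : ∀ᵐ ω ∂Qstar, X ω ≤ Y ω := hQstar.ae_le ((Lp.coeFn_le X Y).mpr hXY)
  have hnn : 0 ≤ᵐ[Qstar] fun ω => Y ω - X ω :=
    hXYae.mono fun ω h => sub_nonneg.mpr h
  have hsub : ∫ ω, (Y ω - X ω) ∂Qstar
      = (∫ ω, (K₂ ω - X ω) ∂Qstar) - ∫ ω, (K₂ ω - Y ω) ∂Qstar := by
    rw [integral_sub iY iX, integral_sub iK₂ iX, integral_sub iK₂ iY]; ring
  have hile : ∫ ω, (Y ω - X ω) ∂Qstar ≤ 0 := by rw [hsub]; linarith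
  have hzero : (fun ω => Y ω - X ω) =ᵐ[Qstar] 0 :=
    (integral_eq_zero_iff_of_nonneg_ae hnn (iY.sub iX)).mp
      (le_antisymm hile (integral_nonneg_of_ae hnn))
  -- pointwise description of `Y`
  have hYcoe : ∀ᵐ ω ∂μ, Y ω = min (X ω + ε) (K₂ ω) := by
    filter_upwards [Lp.coeFn_inf (X + Lp.const ⊤ μ ε) K₂,
      Lp.coeFn_add X (Lp.const ⊤ μ ε), Lp.coeFn_const (p := ⊤) (μ := μ) (c := ε)]
      with ω hω ha hc
    rw [hYdef]
    calc ((X + Lp.const ⊤ μ ε) ⊓ K₂ : Lp ℝ ⊤ μ) ω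
        = min ((X + Lp.const ⊤ μ ε) ω) (K₂ ω) := hω
      _ = min (X ω + ε) (K₂ ω) := by rw [ha]; simp [hc]
  -- conclude `X = K₂` Q*-a.e.
  have hXK₂ : ∀ᵐ ω ∂Qstar, K₂ ω - X ω = 0 := by
    filter_upwards [hzero, hQstar.ae_le hYcoe,
      hQstar.ae_le ((Lp.coeFn_le X K₂).mpr h2)] with ω hz hy hle
    have hz' : Y ω = X ω := by
      have := hz; simp only [Pi.zero_apply] at this; linarith
    rw [hy] at hz'
    rcases le_or_gt (K₂ ω) (X ω + ε) with hc | hc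
    · rw [min_eq_right hc] at hz'; linarith
    · rw [min_eq_left hc.le] at hz'; linarith
  have hiX : ∫ ω, (K₂ ω - X ω) ∂Qstar = 0 := by
    rw [integral_congr_ae hXK₂]; simp
  have hiY : ∫ ω, (K₂ ω - Y ω) ∂Qstar = 0 := by
    have : (fun ω => K₂ ω - Y ω) =ᵐ[Qstar] fun ω => K₂ ω - X ω := by
      filter_upwards [hzero] with ω hz
      simp only [Pi.zero_apply] at hz; linarith
    rw [integral_congr_ae this, hiX]
  linarith [hint, hiY]

end Aux

/-- Active constraint / duality of levels: for an optimal test `X*` and a representative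
measure `Q*` with value `γ_α > 0`, one has `ρ₁(X*) = α`, and `X*` minimizes `ρ₁` over
`X^{γ_α} = {K₁ ≤ X ≤ K₂, E_{Q*}[K₂ - X] ≤ γ_α}`. -/
theorem active_constraint {Ω : Type*} [MeasurableSpace Ω] (μ : Measure Ω)
    [IsProbabilityMeasure μ] (ρ₁ ρ₂ : Lp ℝ ⊤ μ → ℝ)
    (hρ₁ : IsConvexExpectation μ ρ₁) (hρ₂ : IsConvexExpectation μ ρ₂)
    (hcb₁ : ContinuousFromBelow μ ρ₁) (hcb₂ : ContinuousFromBelow μ ρ₂)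
    (K₁ K₂ : Lp ℝ ⊤ μ) (hK₁ : 0 ≤ K₁) (hK : ∀ᵐ ω ∂μ, K₁ ω < K₂ ω)
    (α : ℝ) (hα₁ : ρ₁ K₁ ≤ α) (hα₂ : α ≤ ρ₁ K₂)
    (S : Set (Lp ℝ ⊤ μ)) (hS : S = {X : Lp ℝ ⊤ μ | K₁ ≤ X ∧ X ≤ K₂ ∧ ρ₁ X ≤ α})
    (Xstar : Lp ℝ ⊤ μ) (hXstarMem : Xstar ∈ S)
    (hXstarOpt : ∀ X ∈ S, ρ₂ (K₂ - Xstar) ≤ ρ₂ (K₂ - X))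
    (Qstar : Measure Ω) [IsProbabilityMeasure Qstar] (hQstar : Qstar ≪ μ)
    (γ : ℝ) (hγdef : ∫ ω, (K₂ ω - Xstar ω) ∂Qstar = γ)
    (hγinf : ∀ X ∈ S, γ ≤ ∫ ω, (K₂ ω - X ω) ∂Qstar)
    (hγpos : 0 < γ) :
    ρ₁ Xstar = α ∧
      ∀ X : Lp ℝ ⊤ μ, K₁ ≤ X → X ≤ K₂ → (∫ ω, (K₂ ω - X ω) ∂Qstar) ≤ γ →
        ρ₁ Xstar ≤ ρ₁ X := by
  obtain ⟨hmono, htrans, -⟩ := hρ₁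
  have hγinf' : ∀ X : Lp ℝ ⊤ μ, K₁ ≤ X → X ≤ K₂ → ρ₁ X ≤ α →
      γ ≤ ∫ ω, (K₂ ω - X ω) ∂Qstar := by
    intro X h1 h2 h3
    exact hγinf X (by rw [hS]; exact ⟨h1, h2, h3⟩)
  rw [hS] at hXstarMem
  obtain ⟨hs1, hs2, hs3⟩ := hXstarMem
  have hkey := key_step μ ρ₁ hmono htrans K₁ K₂ α Qstar hQstar γ hγinf' hγpos
  have hXstarα : ρ₁ Xstar = α :=
    le_antisymm hs3 (hkey Xstar hs1 hs2 (le_of_eq hγdef))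
  refine ⟨hXstarα, fun X h1 h2 h3 => ?_⟩
  rw [hXstarα]
  exact hkey X h1 h2 h3
end
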